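/- With Λ_κ as above, for every f ∈ W^{1,∞}(ℝ²) and g ∈ L²(ℝ²), the commutator satisfies ‖Λ_κ(f ∂ⱼg) − f Λ_κ(∂ⱼg)‖_{L²(ℝ²)} ≤ C ‖f‖_{W^{1,∞}} ‖g‖_{L²} for j = 1, 2, with C independent of κ, f, g. -/

import Mathlib

open MeasureTheory
open scoped ENNReal

lemma sq_half (a : ℝ≥0∞) : (a ^ (1/2 : ℝ)) ^ (2:ℝ) = a := by
  rw [← ENNReal.rpow_mul]; norm_num

lemma young2 (Φ G : (Fin 2 → ℝ) → ℝ≥0∞) (hΦ : Measurable Φ) (hG : Measurable G) :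
    ∫⁻ x, (∫⁻ z, Φ (x - z) * G z) ^ (2:ℝ) ≤
      (∫⁻ w, Φ w) ^ (2:ℝ) * ∫⁻ z, (G z) ^ (2:ℝ) := by
  have hinv : ∀ z : Fin 2 → ℝ, ∫⁻ x, Φ (x - z) = ∫⁻ w, Φ w := fun z =>
    lintegral_sub_right_eq_self Φ z
  have hmeas : Measurable fun p : (Fin 2 → ℝ) × (Fin 2 → ℝ) => Φ (p.1 - p.2) * (G p.2) ^ (2:ℝ) :=
    (hΦ.comp (measurable_fst.sub measurable_snd)).mul ((hG.comp measurable_snd).pow_const _)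
  have key : ∀ x, (∫⁻ z, Φ (x - z) * G z) ^ (2:ℝ) ≤
      (∫⁻ w, Φ w) * ∫⁻ z, Φ (x - z) * (G z) ^ (2:ℝ) := by
    intro x
    have hΦx : Measurable fun z => Φ (x - z) := hΦ.comp (measurable_const.sub measurable_id)
    have h1 : (∫⁻ z, Φ (x - z) * G z) ≤
        (∫⁻ z, Φ (x - z)) ^ (1/2 : ℝ) * (∫⁻ z, Φ (x - z) * (G z) ^ (2:ℝ)) ^ (1/2 : ℝ) := by
      have H := ENNReal.lintegral_mul_le_Lp_mul_Lq (volume : Measure (Fin 2 → ℝ))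
        (p := 2) (q := 2) ⟨by norm_num, by norm_num, by norm_num⟩
        (f := fun z => (Φ (x - z)) ^ (1/2 : ℝ))
        (g := fun z => (Φ (x - z)) ^ (1/2 : ℝ) * G z)
        ((hΦx.pow_const _).aemeasurable)
        (((hΦx.pow_const _).mul hG).aemeasurable)
      calc (∫⁻ z, Φ (x - z) * G z)
          = ∫⁻ z, (Φ (x - z)) ^ (1/2 : ℝ) * ((Φ (x - z)) ^ (1/2 : ℝ) * G z) := by
            congr 1; ext z; rw [← mul_assoc, ← ENNReal.rpow_add_of_nonneg _ _ (by norm_num) (by norm_num)]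
            norm_num
        _ ≤ _ := H
        _ = (∫⁻ z, Φ (x - z)) ^ (1/2 : ℝ) * (∫⁻ z, Φ (x - z) * (G z) ^ (2:ℝ)) ^ (1/2 : ℝ) := by
            congr 2
            · exact lintegral_congr fun z => sq_half _
            · exact lintegral_congr fun z => by
                rw [ENNReal.mul_rpow_of_nonneg _ _ (by norm_num), sq_half]
    calc (∫⁻ z, Φ (x - z) * G z) ^ (2:ℝ)
        ≤ ((∫⁻ z, Φ (x - z)) ^ (1/2 : ℝ) * (∫⁻ z, Φ (x - z) * (G z) ^ (2:ℝ)) ^ (1/2 : ℝ)) ^ (2:ℝ) :=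
          ENNReal.rpow_le_rpow h1 (by norm_num)
      _ = (∫⁻ w, Φ w) * ∫⁻ z, Φ (x - z) * (G z) ^ (2:ℝ) := by
          rw [ENNReal.mul_rpow_of_nonneg _ _ (by norm_num), sq_half, sq_half]
          congr 1
          calc ∫⁻ z, Φ (x - z) = ∫⁻ z, Φ ((MeasurableEquiv.subLeft x) z) := rfl
            _ = ∫⁻ w, Φ w ∂(Measure.map (MeasurableEquiv.subLeft x) volume) :=
                (MeasureTheory.lintegral_map_equiv _ _).symm
            _ = ∫⁻ w, Φ w := by rw [show ((MeasurableEquiv.subLeft x : (Fin 2 → ℝ) ≃ᵐ (Fin 2 → ℝ)) : (Fin 2 → ℝ) → (Fin 2 → ℝ)) = fun z => x - z from rfl, Measure.map_sub_left_eq_self volume x]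
  calc ∫⁻ x, (∫⁻ z, Φ (x - z) * G z) ^ (2:ℝ)
      ≤ ∫⁻ x, (∫⁻ w, Φ w) * ∫⁻ z, Φ (x - z) * (G z) ^ (2:ℝ) := lintegral_mono key
    _ = (∫⁻ w, Φ w) * ∫⁻ x, ∫⁻ z, Φ (x - z) * (G z) ^ (2:ℝ) := lintegral_const_mul _ <|
        Measurable.lintegral_prod_right hmeas
    _ = (∫⁻ w, Φ w) * ∫⁻ z, ∫⁻ x, Φ (x - z) * (G z) ^ (2:ℝ) := by
        rw [lintegral_lintegral_swap hmeas.aemeasurable]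
    _ = (∫⁻ w, Φ w) * ∫⁻ z, (∫⁻ w, Φ w) * (G z) ^ (2:ℝ) := by
        congr 1; refine lintegral_congr fun z => ?_
        rw [lintegral_mul_const _ (show Measurable fun x : Fin 2 → ℝ => Φ (x - z) from hΦ.comp (measurable_id.sub_const z)), hinv z, mul_comm]
    _ = (∫⁻ w, Φ w) ^ (2:ℝ) * ∫⁻ z, (G z) ^ (2:ℝ) := by
        rw [lintegral_const_mul _ (hG.pow_const _), ← mul_assoc]
        congr 1
        rw [show (2:ℝ) = ((2:ℕ):ℝ) by norm_num, ENNReal.rpow_natCast, sq]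

lemma stmt10_pointwise (ζ : (Fin 2 → ℝ) → ℝ) (hζ : ContDiff ℝ (⊤ : ℕ∞) ζ)
    (hζsupp : tsupport ζ ⊆ Metric.closedBall 0 1)
    (hζnn : ∀ x, 0 ≤ ζ x)
    (κ : ℝ) (hκ : 0 < κ) (f g : (Fin 2 → ℝ) → ℝ)
    (hf : ContDiff ℝ 1 f) (hg : ContDiff ℝ 1 g)
    (K : ℝ) (hK : 0 ≤ K) (hfK : ∀ x, |f x| ≤ K) (hfdK : ∀ x, ‖fderiv ℝ f x‖ ≤ K)
    (v : Fin 2 → ℝ) (hv : ‖v‖ = 1) (x : Fin 2 → ℝ) :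
    (‖(∫ z, (κ ^ 2)⁻¹ * ζ (κ⁻¹ • (x - z)) * (f z * fderiv ℝ g z v)) -
      f x * ∫ z, (κ ^ 2)⁻¹ * ζ (κ⁻¹ • (x - z)) * fderiv ℝ g z v‖₊ : ℝ≥0∞) ≤
      ENNReal.ofReal K * ∫⁻ z, ENNReal.ofReal ((κ^2)⁻¹ *
        (‖fderiv ℝ ζ (κ⁻¹ • (x - z))‖ + ζ (κ⁻¹ • (x - z)))) * (‖g z‖₊ : ℝ≥0∞) := by
  have hDgc : Continuous fun z => fderiv ℝ g z v :=
    (hg.continuous_fderiv_apply one_ne_zero).comp (continuous_id.prodMk continuous_const)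
  have hmc : ContDiff ℝ (⊤ : ℕ∞) (fun z : Fin 2 → ℝ => κ⁻¹ • (x - z)) :=
    (contDiff_const.sub contDiff_id).const_smul _
  have hkc : ContDiff ℝ 1 (fun z : Fin 2 → ℝ => (κ^2)⁻¹ * ζ (κ⁻¹ • (x - z))) :=
    contDiff_const.mul ((hζ.comp hmc).of_le (by simp))
  have hnorm_m : ∀ z : Fin 2 → ℝ, ‖κ⁻¹ • (x - z)‖ = κ⁻¹ * ‖x - z‖ := fun z => by
    rw [norm_smul, norm_inv, Real.norm_eq_abs, abs_of_pos hκ]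
  have hksupp : HasCompactSupport (fun z : Fin 2 → ℝ => (κ^2)⁻¹ * ζ (κ⁻¹ • (x - z))) := by
    apply HasCompactSupport.intro (isCompact_closedBall x κ)
    intro z hz
    have h1 : κ⁻¹ • (x - z) ∉ tsupport ζ := by
      intro hmem
      apply hz
      have h2 := hζsupp hmem
      rw [Metric.mem_closedBall, dist_zero_right, hnorm_m z] at h2
      rw [Metric.mem_closedBall, dist_comm, dist_eq_norm]
      calc ‖x - z‖ = κ * (κ⁻¹ * ‖x - z‖) := by field_simp
        _ ≤ κ * 1 := mul_le_mul_of_nonneg_left h2 hκ.le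
        _ = κ := mul_one κ
    rw [image_eq_zero_of_notMem_tsupport h1, mul_zero]
  set u : (Fin 2 → ℝ) → ℝ := fun z => (κ^2)⁻¹ * ζ (κ⁻¹ • (x - z)) * (f z - f x) with hudef
  have hu_cd : ContDiff ℝ 1 u := hkc.mul (hf.sub contDiff_const)
  have hu_supp : HasCompactSupport u := hksupp.mul_right
  have hI1 : Integrable (fun z => (κ^2)⁻¹ * ζ (κ⁻¹ • (x - z)) * (f z * fderiv ℝ g z v)) :=
    ((hkc.continuous.mul (hf.continuous.mul hDgc)).integrable_of_hasCompactSupport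
      hksupp.mul_right)
  have hI2 : Integrable (fun z => (κ^2)⁻¹ * ζ (κ⁻¹ • (x - z)) * fderiv ℝ g z v) :=
    ((hkc.continuous.mul hDgc).integrable_of_hasCompactSupport hksupp.mul_right)
  have hI3 : Integrable (fun z => u z * fderiv ℝ g z v) :=
    ((hu_cd.continuous.mul hDgc).integrable_of_hasCompactSupport hu_supp.mul_right)
  have hDucont : Continuous (fun z => fderiv ℝ u z v) :=
    (hu_cd.continuous_fderiv_apply one_ne_zero).comp (continuous_id.prodMk continuous_const)
  have hDusupp : HasCompactSupport (fun z => fderiv ℝ u z v) := hu_supp.fderiv_apply ℝ v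
  have hI4 : Integrable (fun z => fderiv ℝ u z v * g z) :=
    ((hDucont.mul hg.continuous).integrable_of_hasCompactSupport hDusupp.mul_right)
  have hI5 : Integrable (fun z => u z * g z) :=
    ((hu_cd.continuous.mul hg.continuous).integrable_of_hasCompactSupport hu_supp.mul_right)
  -- Step A
  have eqA : (∫ z, (κ ^ 2)⁻¹ * ζ (κ⁻¹ • (x - z)) * (f z * fderiv ℝ g z v)) -
      f x * ∫ z, (κ ^ 2)⁻¹ * ζ (κ⁻¹ • (x - z)) * fderiv ℝ g z v =
      ∫ z, u z * fderiv ℝ g z v := by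
    rw [← integral_const_mul (f x), ← integral_sub hI1 (hI2.const_mul (f x))]
    exact integral_congr_ae (Filter.Eventually.of_forall fun z => by simp only [hudef]; ring)
  -- Step B
  have eqB : ∫ z, u z * fderiv ℝ g z v = -∫ z, fderiv ℝ u z v * g z :=
    integral_mul_fderiv_eq_neg_fderiv_mul_of_integrable hI4 hI3 hI5
      (fun y _ => hu_cd.differentiable one_ne_zero y) (fun y _ => hg.differentiable one_ne_zero y)
  -- Step C : pointwise bound on the derivative
  have hDub : ∀ z, |fderiv ℝ u z v| ≤ K * ((κ^2)⁻¹ *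
      (‖fderiv ℝ ζ (κ⁻¹ • (x - z))‖ + ζ (κ⁻¹ • (x - z)))) := by
    intro z
    set y : Fin 2 → ℝ := κ⁻¹ • (x - z) with hydef
    have hm' : HasFDerivAt (fun z : Fin 2 → ℝ => κ⁻¹ • (x - z))
        (κ⁻¹ • (-(ContinuousLinearMap.id ℝ (Fin 2 → ℝ)))) z :=
      ((hasFDerivAt_id z).const_sub x).const_smul κ⁻¹
    have hζ' : HasFDerivAt (fun z : Fin 2 → ℝ => ζ (κ⁻¹ • (x - z)))
        ((fderiv ℝ ζ y).comp (κ⁻¹ • (-(ContinuousLinearMap.id ℝ (Fin 2 → ℝ))))) z :=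
      (((hζ.differentiable (by simp)) y).hasFDerivAt).comp z hm'
    have hk' : HasFDerivAt (fun z : Fin 2 → ℝ => (κ^2)⁻¹ * ζ (κ⁻¹ • (x - z)))
        ((κ^2)⁻¹ • ((fderiv ℝ ζ y).comp (κ⁻¹ • (-(ContinuousLinearMap.id ℝ (Fin 2 → ℝ)))))) z :=
      hζ'.const_mul _
    have hfz' : HasFDerivAt (fun w => f w - f x) (fderiv ℝ f z) z :=
      ((hf.differentiable one_ne_zero z).hasFDerivAt).sub_const (f x)
    have hu' : HasFDerivAt u
        (((κ^2)⁻¹ * ζ y) • (fderiv ℝ f z) + (f z - f x) •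
          ((κ^2)⁻¹ • ((fderiv ℝ ζ y).comp (κ⁻¹ • (-(ContinuousLinearMap.id ℝ (Fin 2 → ℝ))))))) z :=
      hk'.mul hfz'
    have hDu : fderiv ℝ u z v = ((κ^2)⁻¹ * ζ y) * (fderiv ℝ f z v) +
        (f z - f x) * ((κ^2)⁻¹ * (fderiv ℝ ζ y (κ⁻¹ • (-v)))) := by
      rw [hu'.fderiv]
      simp [ContinuousLinearMap.add_apply, ContinuousLinearMap.smul_apply,
        ContinuousLinearMap.comp_apply, smul_eq_mul]
    by_cases hy : y ∈ tsupport ζ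
    · have hy1 : ‖y‖ ≤ 1 := by
        have := hζsupp hy
        rwa [Metric.mem_closedBall, dist_zero_right] at this
      have hxz : ‖x - z‖ ≤ κ := by
        have h2 : κ⁻¹ * ‖x - z‖ ≤ 1 := by rw [← hnorm_m z]; exact hy1
        calc ‖x - z‖ = κ * (κ⁻¹ * ‖x - z‖) := by field_simp
          _ ≤ κ * 1 := mul_le_mul_of_nonneg_left h2 hκ.le
          _ = κ := mul_one κ
      have hfzx : |f z - f x| ≤ K * κ := by
        have := Convex.norm_image_sub_le_of_norm_fderiv_le
          (fun w _ => hf.differentiable one_ne_zero w)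
          (fun w _ => hfdK w) convex_univ (Set.mem_univ x) (Set.mem_univ z)
        rw [Real.norm_eq_abs] at this
        calc |f z - f x| ≤ K * ‖z - x‖ := this
          _ = K * ‖x - z‖ := by rw [norm_sub_rev]
          _ ≤ K * κ := mul_le_mul_of_nonneg_left hxz hK
      have hterm1 : |((κ^2)⁻¹ * ζ y) * (fderiv ℝ f z v)| ≤ (κ^2)⁻¹ * ζ y * K := by
        rw [abs_mul]
        have h1 : |(κ^2)⁻¹ * ζ y| = (κ^2)⁻¹ * ζ y :=
          abs_of_nonneg (mul_nonneg (by positivity) (hζnn y))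
        rw [h1]
        refine mul_le_mul_of_nonneg_left ?_ (mul_nonneg (by positivity) (hζnn y))
        calc |fderiv ℝ f z v| ≤ ‖fderiv ℝ f z‖ * ‖v‖ := (fderiv ℝ f z).le_opNorm v
          _ = ‖fderiv ℝ f z‖ := by rw [hv, mul_one]
          _ ≤ K := hfdK z
      have hterm2 : |(f z - f x) * ((κ^2)⁻¹ * (fderiv ℝ ζ y (κ⁻¹ • (-v))))| ≤
          (κ^2)⁻¹ * ‖fderiv ℝ ζ y‖ * K := by
        rw [abs_mul, abs_mul]
        have h3 : |fderiv ℝ ζ y (κ⁻¹ • (-v))| ≤ κ⁻¹ * ‖fderiv ℝ ζ y‖ := by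
          calc |fderiv ℝ ζ y (κ⁻¹ • (-v))| ≤ ‖fderiv ℝ ζ y‖ * ‖κ⁻¹ • (-v)‖ :=
              (fderiv ℝ ζ y).le_opNorm _
            _ = ‖fderiv ℝ ζ y‖ * (κ⁻¹ * 1) := by
                rw [norm_smul, norm_neg, hv, norm_inv, Real.norm_eq_abs, abs_of_pos hκ]
            _ = κ⁻¹ * ‖fderiv ℝ ζ y‖ := by ring
        have h4 : |(κ^2)⁻¹| = (κ^2)⁻¹ := abs_of_nonneg (by positivity)
        rw [h4]
        calc |f z - f x| * ((κ^2)⁻¹ * |fderiv ℝ ζ y (κ⁻¹ • (-v))|)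
            ≤ (K * κ) * ((κ^2)⁻¹ * (κ⁻¹ * ‖fderiv ℝ ζ y‖)) := by
              refine mul_le_mul hfzx (mul_le_mul_of_nonneg_left h3 (by positivity))
                (by positivity) (by positivity)
          _ = (κ^2)⁻¹ * ‖fderiv ℝ ζ y‖ * (K * (κ * κ⁻¹)) := by ring
          _ = (κ^2)⁻¹ * ‖fderiv ℝ ζ y‖ * K := by
              rw [mul_inv_cancel₀ hκ.ne', mul_one]
      calc |fderiv ℝ u z v| ≤ |((κ^2)⁻¹ * ζ y) * (fderiv ℝ f z v)| +
            |(f z - f x) * ((κ^2)⁻¹ * (fderiv ℝ ζ y (κ⁻¹ • (-v))))| := by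
            rw [hDu]; exact abs_add_le _ _
        _ ≤ (κ^2)⁻¹ * ζ y * K + (κ^2)⁻¹ * ‖fderiv ℝ ζ y‖ * K := add_le_add hterm1 hterm2
        _ = K * ((κ^2)⁻¹ * (‖fderiv ℝ ζ y‖ + ζ y)) := by ring
    · have hζy : ζ y = 0 := image_eq_zero_of_notMem_tsupport hy
      have hdζy : fderiv ℝ ζ y = 0 := by
        by_contra h
        exact hy (support_fderiv_subset ℝ (Function.mem_support.mpr h))
      rw [hDu, hζy, hdζy]
      simp
  -- Step D : assemble
  rw [eqA, eqB]
  calc (‖-∫ z, fderiv ℝ u z v * g z‖₊ : ℝ≥0∞)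
      = ‖∫ z, fderiv ℝ u z v * g z‖₊ := by rw [nnnorm_neg]
    _ ≤ ∫⁻ z, ‖fderiv ℝ u z v * g z‖₊ := enorm_integral_le_lintegral_enorm _
    _ ≤ ∫⁻ z, ENNReal.ofReal K * (ENNReal.ofReal ((κ^2)⁻¹ *
          (‖fderiv ℝ ζ (κ⁻¹ • (x - z))‖ + ζ (κ⁻¹ • (x - z)))) * (‖g z‖₊ : ℝ≥0∞)) := by
        refine lintegral_mono fun z => ?_
        rw [nnnorm_mul, ENNReal.coe_mul]
        have h1 : (‖fderiv ℝ u z v‖₊ : ℝ≥0∞) ≤ ENNReal.ofReal K *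
            ENNReal.ofReal ((κ^2)⁻¹ * (‖fderiv ℝ ζ (κ⁻¹ • (x - z))‖ + ζ (κ⁻¹ • (x - z)))) := by
          rw [← ENNReal.ofReal_mul hK]
          rw [show ((‖fderiv ℝ u z v‖₊ : ℝ≥0∞)) = ENNReal.ofReal |fderiv ℝ u z v| from by
            rw [← Real.norm_eq_abs]; exact (ofReal_norm_eq_enorm _).symm]
          exact ENNReal.ofReal_le_ofReal (hDub z)
        exact (mul_le_mul_left h1 _).trans_eq (mul_assoc _ _ _)
    _ = ENNReal.ofReal K * ∫⁻ z, ENNReal.ofReal ((κ^2)⁻¹ *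
          (‖fderiv ℝ ζ (κ⁻¹ • (x - z))‖ + ζ (κ⁻¹ • (x - z)))) * (‖g z‖₊ : ℝ≥0∞) := by
        rw [lintegral_const_mul' _ _ ENNReal.ofReal_ne_top]

/-- Mollifier commutator estimate: with `Λ_κ` the convolution mollifier at scale `κ > 0` on
`ℝ²`, for `f ∈ W^{1,∞}` (with `‖f‖_{W^{1,∞}} ≤ K`) and `g ∈ L²`, and for `j = 1,2`,
`‖Λ_κ(f ∂ⱼg) − f Λ_κ(∂ⱼg)‖_{L²} ≤ C K ‖g‖_{L²}`, with `C` independent of `κ, f, g`. -/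
theorem stmt10 (ζ : (Fin 2 → ℝ) → ℝ) (hζ : ContDiff ℝ (⊤ : ℕ∞) ζ)
    (hζsupp : tsupport ζ ⊆ Metric.closedBall 0 1)
    (hζnn : ∀ x, 0 ≤ ζ x) (hζint : ∫ x, ζ x = 1) :
    ∃ C > 0, ∀ κ : ℝ, 0 < κ → ∀ f g : (Fin 2 → ℝ) → ℝ,
      ContDiff ℝ 1 f → ContDiff ℝ 1 g → MemLp g 2 volume →
      ∀ K : ℝ, 0 ≤ K → (∀ x, |f x| ≤ K) → (∀ x, ‖fderiv ℝ f x‖ ≤ K) →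
      ∀ j : Fin 2,
      eLpNorm (fun x =>
          (∫ z, (κ ^ 2)⁻¹ * ζ (κ⁻¹ • (x - z)) * (f z * fderiv ℝ g z (Pi.single j 1))) -
            f x * ∫ z, (κ ^ 2)⁻¹ * ζ (κ⁻¹ • (x - z)) * fderiv ℝ g z (Pi.single j 1))
        2 volume ≤
        ENNReal.ofReal (C * K) * eLpNorm g 2 volume := by
  have hζc : HasCompactSupport ζ :=
    HasCompactSupport.of_support_subset_isCompact (isCompact_closedBall 0 1)
      (subset_trans (subset_tsupport ζ) hζsupp)
  set Ψ : (Fin 2 → ℝ) → ℝ := fun y => ‖fderiv ℝ ζ y‖ + ζ y with hΨdef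
  have hΨc : Continuous Ψ := ((hζ.continuous_fderiv (by simp)).norm).add hζ.continuous
  have hΨs : HasCompactSupport Ψ := ((hζc.fderiv ℝ).norm).add hζc
  have hΨi : Integrable Ψ := hΨc.integrable_of_hasCompactSupport hΨs
  have hΨnn : ∀ y, 0 ≤ Ψ y := fun y => add_nonneg (norm_nonneg _) (hζnn y)
  have hAnn : 0 ≤ ∫ y, Ψ y := integral_nonneg hΨnn
  refine ⟨(∫ y, Ψ y) + 1, by linarith, ?_⟩
  set C := (∫ y, Ψ y) + 1 with hCdef
  have hC : 0 < C := by linarith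
  intro κ hκ f g hf hg hgL2 K hK hfK hfdK j
  set v : Fin 2 → ℝ := Pi.single j (1:ℝ) with hvdef
  have hv : ‖v‖ = 1 := by rw [hvdef, Pi.norm_single, norm_one]
  have hDgc : Continuous fun z => fderiv ℝ g z v :=
    (hg.continuous_fderiv_apply one_ne_zero).comp (continuous_id.prodMk continuous_const)
  set Φ : (Fin 2 → ℝ) → ℝ≥0∞ := fun w => ENNReal.ofReal ((κ^2)⁻¹ * Ψ (κ⁻¹ • w)) with hΦdef
  set G : (Fin 2 → ℝ) → ℝ≥0∞ := fun z => (‖g z‖₊ : ℝ≥0∞) with hGdef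
  have hΦm : Measurable Φ := by
    have : Continuous fun w : Fin 2 → ℝ => (κ^2)⁻¹ * Ψ (κ⁻¹ • w) :=
      continuous_const.mul (hΨc.comp (continuous_const_smul _))
    exact this.measurable.ennreal_ofReal
  have hGm : Measurable G := hg.continuous.measurable.nnnorm.coe_nnreal_ennreal
  -- total mass of Φ
  have hΦmass : ∫⁻ w, Φ w = ENNReal.ofReal (∫ y, Ψ y) := by
    have hint : Integrable (fun w : Fin 2 → ℝ => (κ^2)⁻¹ * Ψ (κ⁻¹ • w)) := by
      refine (Continuous.integrable_of_hasCompactSupport ?_ ?_)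
      · exact continuous_const.mul (hΨc.comp (continuous_const_smul _))
      · refine HasCompactSupport.mul_left ?_
        exact hΨs.comp_smul (inv_ne_zero hκ.ne')
    rw [← MeasureTheory.ofReal_integral_eq_lintegral_ofReal hint
      (Filter.Eventually.of_forall fun w => mul_nonneg (by positivity) (hΨnn _))]
    congr 1
    rw [integral_const_mul, MeasureTheory.Measure.integral_comp_inv_smul volume Ψ κ]
    have : Module.finrank ℝ (Fin 2 → ℝ) = 2 := Module.finrank_fin_fun ℝ
    rw [this, smul_eq_mul, abs_of_nonneg (by positivity)]
    field_simp
  -- pointwise commutator bound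
  have main : ∀ x, (‖(∫ z, (κ ^ 2)⁻¹ * ζ (κ⁻¹ • (x - z)) * (f z * fderiv ℝ g z v)) -
      f x * ∫ z, (κ ^ 2)⁻¹ * ζ (κ⁻¹ • (x - z)) * fderiv ℝ g z v‖₊ : ℝ≥0∞) ≤
      ENNReal.ofReal K * ∫⁻ z, Φ (x - z) * G z := by
    intro x
    have := stmt10_pointwise ζ hζ hζsupp hζnn κ hκ f g hf hg K hK hfK hfdK v hv x
    simpa [hΦdef, hGdef, sub_sub_cancel] using this
  -- conclude via Young's inequality
  have h2 : (2:ℝ≥0∞) ≠ 0 := by norm_num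
  have h2' : (2:ℝ≥0∞) ≠ ∞ := by norm_num
  rw [eLpNorm_eq_lintegral_rpow_enorm_toReal h2 h2', eLpNorm_eq_lintegral_rpow_enorm_toReal h2 h2']
  have htoReal : (2:ℝ≥0∞).toReal = (2:ℝ) := by norm_num
  rw [htoReal]
  have hKtop : (ENNReal.ofReal K) ^ (2:ℝ) ≠ ∞ := by
    exact ENNReal.rpow_ne_top_of_nonneg (by norm_num) ENNReal.ofReal_ne_top
  calc (∫⁻ x, (‖_‖₊ : ℝ≥0∞) ^ (2:ℝ)) ^ (1/(2:ℝ))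
      ≤ (∫⁻ x, (ENNReal.ofReal K * ∫⁻ z, Φ (x - z) * G z) ^ (2:ℝ)) ^ (1/(2:ℝ)) := by
        refine ENNReal.rpow_le_rpow (lintegral_mono fun x => ?_) (by norm_num)
        exact ENNReal.rpow_le_rpow (main x) (by norm_num)
    _ = ((ENNReal.ofReal K) ^ (2:ℝ) * ∫⁻ x, (∫⁻ z, Φ (x - z) * G z) ^ (2:ℝ)) ^ (1/(2:ℝ)) := by
        rw [← lintegral_const_mul' _ _ hKtop]
        congr 1
        exact lintegral_congr fun x => by
          rw [ENNReal.mul_rpow_of_nonneg _ _ (by norm_num)]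
    _ ≤ ((ENNReal.ofReal K) ^ (2:ℝ) * ((∫⁻ w, Φ w) ^ (2:ℝ) * ∫⁻ z, (G z) ^ (2:ℝ))) ^ (1/(2:ℝ)) := by
        refine ENNReal.rpow_le_rpow (mul_le_mul_right (young2 Φ G hΦm hGm) _) (by norm_num)
    _ ≤ ENNReal.ofReal (C * K) * (∫⁻ z, (G z) ^ (2:ℝ)) ^ (1/(2:ℝ)) := by
        rw [ENNReal.mul_rpow_of_nonneg _ _ (by norm_num),
          ENNReal.mul_rpow_of_nonneg _ _ (by norm_num)]
        rw [show ((ENNReal.ofReal K) ^ (2:ℝ)) ^ (1/(2:ℝ)) = ENNReal.ofReal K from by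
          rw [← ENNReal.rpow_mul]; norm_num]
        rw [show ((∫⁻ w, Φ w) ^ (2:ℝ)) ^ (1/(2:ℝ)) = ∫⁻ w, Φ w from by
          rw [← ENNReal.rpow_mul]; norm_num]
        rw [← mul_assoc, ENNReal.ofReal_mul hC.le]
        refine mul_le_mul_left ?_ _
        rw [hΦmass, mul_comm]
        exact mul_le_mul' (ENNReal.ofReal_le_ofReal (by rw [hCdef]; linarith)) le_rfl
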